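/- arXiv:1210.2950 — 16 statements merged into one kernel-verified Lean document; each statement's English description precedes it below -/
import Mathlib

section
/- Let K be a commutative ring, A a commutative K-algebra, and let E, J : A → A be K-linear maps with E ∘ E = E and E + J = id_A (so J is also a projector). Then the following are equivalent: (1) E is multiplicative, i.e. E(f·g) = E(f)·E(g) for all f, g ∈ A; (2) J satisfies the identity J(f)·J(g) + J(f·g) = J(f)·g + f·J(g) for all f, g ∈ A; (3) the range of E is closed under multiplication and the range of J is an ideal of A. -/
/-- Let `K` be a commutative ring, `A` a commutative `K`-algebra, and
`E, J : A → A` `K`-linear maps with `E ∘ E = E` and `E + J = id`.  TFAE: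
(1) `E` is multiplicative; (2) `J f * J g + J (f*g) = J f * g + f * J g`;
(3) the range of `E` is closed under multiplication and the range of `J` is an ideal. -/
theorem stmt_0 (K : Type*) [CommRing K] (A : Type*) [CommRing A] [Algebra K A]
    (E J : A →ₗ[K] A) (hE : E ∘ₗ E = E) (hEJ : E + J = LinearMap.id) :
    List.TFAE [
      ∀ f g : A, E (f * g) = E f * E g,
      ∀ f g : A, J f * J g + J (f * g) = J f * g + f * J g,
      (∀ x y : A, x ∈ Set.range (⇑E) → y ∈ Set.range (⇑E) → x * y ∈ Set.range (⇑E)) ∧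
        ∃ I : Ideal A, (I : Set A) = Set.range (⇑J)
    ] := by
  have hJ : ∀ x : A, J x = x - E x := by
    intro x
    have h := LinearMap.congr_fun hEJ x
    simp only [LinearMap.add_apply, LinearMap.id_apply] at h
    linear_combination h
  have hEE : ∀ x : A, E (E x) = E x := fun x => LinearMap.congr_fun hE x
  have hrange : Set.range (⇑J) = {x : A | E x = 0} := by
    ext x
    constructor
    · rintro ⟨y, rfl⟩
      simp only [Set.mem_setOf_eq, hJ, map_sub, hEE, sub_self]
    · intro hx
      exact ⟨x, by rw [hJ, hx, sub_zero]⟩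
  tfae_have 1 → 2
  · intro h f g
    simp only [hJ]
    linear_combination -h f g
  tfae_have 2 → 1
  · intro h f g
    have := h f g
    simp only [hJ] at this
    linear_combination -this
  tfae_have 1 → 3
  · intro h
    refine ⟨?_, ?_⟩
    · rintro x y ⟨a, rfl⟩ ⟨b, rfl⟩
      exact ⟨a * b, h a b⟩
    · refine ⟨⟨⟨⟨{x : A | E x = 0}, ?_⟩, ?_⟩, ?_⟩, ?_⟩
      · intro a b (ha : E a = 0) (hb : E b = 0)
        simp only [Set.mem_setOf_eq, map_add, ha, hb, add_zero]
      · simp only [Set.mem_setOf_eq, map_zero]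
      · intro c x (hx : E x = 0)
        simp only [Set.mem_setOf_eq, smul_eq_mul, h, hx, mul_zero]
      · exact hrange.symm
  tfae_have 3 → 1
  · rintro ⟨hcl, I, hI⟩ f g
    have hker : ∀ x : A, E x = 0 → ∀ c : A, E (c * x) = 0 := by
      intro x hx c
      have hxI : x ∈ I := by
        rw [← SetLike.mem_coe, hI, hrange]; exact hx
      have : c * x ∈ I := I.mul_mem_left c hxI
      rw [← SetLike.mem_coe, hI, hrange] at this
      exact this
    have hfix : ∀ x : A, x ∈ Set.range (⇑E) → E x = x := by
      rintro x ⟨y, rfl⟩; exact hEE y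
    have hfg : f * g = E f * E g + (J f * g + E f * J g) := by
      simp only [hJ]; ring
    have h1 : E (J f * g) = 0 := by
      rw [mul_comm]
      exact hker (J f) (by simp [hJ, map_sub, hEE]) g
    have h2 : E (E f * J g) = 0 := hker (J g) (by simp [hJ, map_sub, hEE]) (E f)
    rw [hfg, map_add, map_add, h1, h2, add_zero, add_zero,
      hfix (E f * E g) (hcl _ _ ⟨f, rfl⟩ ⟨g, rfl⟩)]
  tfae_finish
end

section
/- Let K be a commutative ring, F a commutative K-algebra, ∂ : F → F a K-linear map satisfying the Leibniz rule ∂(fg) = (∂f)·g + f·(∂g), and ∫ : F → F a K-linear section of ∂ (i.e. ∂(∫f) = f for all f). Then the following are equivalent: (1) ∫ satisfies the differential Baxter axiom (∫∂f)·(∫∂g) + ∫∂(fg) = (∫∂f)·g + f·(∫∂g) for all f, g ∈ F; (2) the evaluation e = id_F − ∫∘∂ is multiplicative, i.e. e(fg) = e(f)·e(g) for all f, g; (3) the range of ∫ is an ideal of F. -/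
/-- For a commutative differential algebra `(F, ∂)` over a commutative
ring `K` with a `K`-linear section `∫` of `∂`, TFAE: (1) the differential Baxter axiom;
(2) the evaluation `e = id − ∫∘∂` is multiplicative; (3) the range of `∫` is an ideal. -/
theorem stmt_2 (K : Type*) [CommRing K] (F : Type*) [CommRing F] [Algebra K F]
    (D I : F →ₗ[K] F)
    (leibniz : ∀ f g : F, D (f * g) = D f * g + f * D g)
    (sect : ∀ f : F, D (I f) = f) :
    List.TFAE [
      ∀ f g : F, I (D f) * I (D g) + I (D (f * g)) = I (D f) * g + f * I (D g),
      ∀ f g : F, f * g - I (D (f * g)) = (f - I (D f)) * (g - I (D g)),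
      ∃ J : Ideal F, (J : Set F) = Set.range (⇑I)
    ] := by
  tfae_have 1 ↔ 2 := by
    constructor
    · intro h f g; linear_combination - h f g
    · intro h f g; linear_combination - h f g
  tfae_have 1 → 3 := by
    intro h
    refine ⟨{ carrier := Set.range ⇑I,
              add_mem' := ?_, zero_mem' := ?_, smul_mem' := ?_ }, rfl⟩
    · rintro a b ⟨x, rfl⟩ ⟨y, rfl⟩
      exact ⟨x + y, map_add I x y⟩
    · exact ⟨0, map_zero I⟩
    · rintro f b ⟨x, rfl⟩
      have hx := h f (I x)
      rw [sect] at hx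
      refine ⟨D (f * I x), ?_⟩
      simp only [smul_eq_mul]
      linear_combination hx
  tfae_have 3 → 1 := by
    rintro ⟨J, hJ⟩ f g
    have fix : ∀ y : F, y ∈ J → I (D y) = y := by
      intro y hy
      have hy' : y ∈ (J : Set F) := hy
      rw [hJ] at hy'
      obtain ⟨c, rfl⟩ := hy'
      rw [sect]
    have memI : ∀ x : F, I x ∈ J := by
      intro x
      have : I x ∈ (J : Set F) := by rw [hJ]; exact Set.mem_range_self x
      exact this
    have hL : I (D f) * I (D g) + I (D (f * g)) ∈ J :=
      J.add_mem (J.mul_mem_right _ (memI _)) (memI _)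
    have hR : I (D f) * g + f * I (D g) ∈ J :=
      J.add_mem (J.mul_mem_right _ (memI _)) (J.mul_mem_left _ (memI _))
    have hD : D (I (D f) * I (D g) + I (D (f * g)))
        = D (I (D f) * g + f * I (D g)) := by
      simp only [map_add, leibniz, sect]
      ring
    calc I (D f) * I (D g) + I (D (f * g))
        = I (D (I (D f) * I (D g) + I (D (f * g)))) := (fix _ hL).symm
      _ = I (D (I (D f) * g + f * I (D g))) := by rw [hD]
      _ = I (D f) * g + f * I (D g) := fix _ hR
  tfae_finish
end

section
/- Let (F, ∂, ∫) be an integro-differential algebra over a commutative ring K. Then F is not a field. -/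
/-- An integro-differential algebra over a commutative ring `K`
is never a field. -/
theorem stmt_3 (K : Type*) [CommRing K] (F : Type*) [CommRing F] [Algebra K F]
    (D I : F →ₗ[K] F)
    (leibniz : ∀ f g : F, D (f * g) = D f * g + f * D g)
    (sect : ∀ f : F, D (I f) = f)
    (diffBaxter : ∀ f g : F,
      I (D f) * I (D g) + I (D (f * g)) = I (D f) * g + f * I (D g)) :
    ¬ IsField F := by
  intro h
  have h10 : (1 : F) ≠ 0 := by
    obtain ⟨x, y, hxy⟩ := h.exists_pair_ne
    intro h1
    exact hxy (by calc x = x * 1 := (mul_one x).symm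
      _ = y * 1 := by rw [h1, mul_zero, mul_zero]
      _ = y := mul_one y)
  have hD1 : D 1 = 0 := by
    have := leibniz 1 1
    simp only [mul_one, one_mul] at this
    linear_combination -this
  by_cases hI1 : I 1 = 0
  · have := sect 1
    rw [hI1, map_zero] at this
    exact h10 this.symm
  · obtain ⟨b, hb⟩ := h.mul_inv_cancel hI1
    have key := diffBaxter (I 1) b
    rw [sect 1, hb, hD1, map_zero] at key
    have : (1 : F) = 0 := by linear_combination -key
    exact h10 this
end

section
/- Let K be a field and (F, ∂, ∫) a nontrivial integro-differential algebra over K. Then the iterated integrals of 1, i.e. the family (∫ⁿ(1))_{n ∈ ℕ} (with ∫⁰(1) = 1), is linearly independent over K. In particular, F is infinite-dimensional as a K-vector space. -/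
/-- In a nontrivial integro-differential algebra over a field `K`,
the iterated integrals `∫ⁿ(1)` (n ∈ ℕ) are linearly independent over `K`;
in particular `F` is infinite-dimensional over `K`. -/
theorem stmt_4 (K : Type*) [Field K] (F : Type*) [CommRing F] [Algebra K F] [Nontrivial F]
    (D I : F →ₗ[K] F)
    (leibniz : ∀ f g : F, D (f * g) = D f * g + f * D g)
    (sect : ∀ f : F, D (I f) = f)
    (diffBaxter : ∀ f g : F,
      I (D f) * I (D g) + I (D (f * g)) = I (D f) * g + f * I (D g)) :
    LinearIndependent K (fun n : ℕ => (I ^ n) (1 : F)) ∧ ¬ FiniteDimensional K F := by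
  have hD1 : D 1 = 0 := by
    have h := leibniz 1 1
    simp only [mul_one, one_mul] at h
    exact left_eq_add.mp h
  -- evaluation operator E = id - I ∘ D
  set E : F →ₗ[K] F := LinearMap.id - I ∘ₗ D with hE
  have hEI : ∀ f : F, E (I f) = 0 := by
    intro f; simp [hE, sect]
  have hE1 : E (1 : F) = 1 := by simp [hE, hD1]
  -- iterated derivatives of iterated integrals
  have key : ∀ k n : ℕ, (D ^ k) ((I ^ n) (1 : F)) =
      if k ≤ n then (I ^ (n - k)) (1 : F) else 0 := by
    intro k
    induction k with
    | zero => intro n; simp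
    | succ k ih =>
      intro n
      have : (D ^ (k + 1)) ((I ^ n) (1 : F)) = D ((D ^ k) ((I ^ n) (1 : F))) := by
        rw [pow_succ']; rfl
      rw [this, ih n]
      by_cases h : k ≤ n
      · rw [if_pos h]
        rcases Nat.lt_or_ge k n with hlt | hge
        · have h1 : 1 ≤ n - k := by omega
          obtain ⟨m, hm⟩ : ∃ m, n - k = m + 1 := ⟨n - k - 1, by omega⟩
          rw [hm, pow_succ', Module.End.mul_apply, sect]
          rw [if_pos (by omega)]
          have hm2 : n - (k + 1) = m := by omega
          rw [hm2]
        · have hk : k = n := le_antisymm h hge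
          subst hk
          simp [hD1, Nat.lt_irrefl]
      · rw [if_neg h, if_neg (by omega), map_zero]
  have phi : ∀ k n : ℕ, (E ∘ₗ (D ^ k)) ((I ^ n) (1 : F)) =
      if n = k then 1 else 0 := by
    intro k n
    simp only [LinearMap.comp_apply, key k n]
    rcases Nat.lt_trichotomy k n with h | h | h
    · rw [if_pos h.le]
      obtain ⟨m, hm⟩ : ∃ m, n - k = m + 1 := ⟨n - k - 1, by omega⟩
      rw [hm, pow_succ', Module.End.mul_apply, hEI, if_neg (by omega)]
    · subst h; simp [hE1]
    · rw [if_neg (by omega), map_zero, if_neg (by omega)]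
  have lin : LinearIndependent K (fun n : ℕ => (I ^ n) (1 : F)) := by
    rw [linearIndependent_iff']
    intro s g hsum i hi
    have h0 : (E ∘ₗ (D ^ i)) (∑ j ∈ s, g j • (I ^ j) (1 : F)) = 0 := by
      rw [hsum, map_zero]
    rw [map_sum] at h0
    simp only [map_smul, phi] at h0
    rw [Finset.sum_eq_single i] at h0
    · rw [if_pos rfl] at h0
      have : algebraMap K F (g i) = 0 := by
        rw [Algebra.algebraMap_eq_smul_one, h0]
      exact (algebraMap K F).injective (by simpa using this)
    · intro j _ hj; rw [if_neg hj, smul_zero]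
    · intro h; exact absurd hi h
  refine ⟨lin, ?_⟩
  intro hfin
  have h1 : Module.rank K F < Cardinal.aleph0 := by
    exact Module.rank_lt_aleph0 K F
  exact absurd lin.aleph0_le_rank (not_le.mpr h1)
end

section
/- Let K be a commutative ring, F a commutative K-algebra, ∂ : F → F a K-linear map satisfying the Leibniz rule ∂(fg) = (∂f)·g + f·(∂g), and ∫ : F → F a K-linear section of ∂ (i.e. ∂(∫f) = f for all f). Then ∫ satisfies the differential Baxter axiom (∫∂f)·(∫∂g) + ∫∂(fg) = (∫∂f)·g + f·(∫∂g) for all f, g ∈ F if and only if ∫ satisfies integration by parts: f·∫g = ∫(f·g) + ∫((∂f)·∫g) for all f, g ∈ F. -/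
/-- For a commutative differential algebra `(F, ∂)` over a commutative
ring `K` with a `K`-linear section `∫` of `∂`, the differential Baxter axiom holds iff
integration by parts `f·∫g = ∫(f·g) + ∫((∂f)·∫g)` holds. -/
theorem stmt_5 (K : Type*) [CommRing K] (F : Type*) [CommRing F] [Algebra K F]
    (D I : F →ₗ[K] F)
    (leibniz : ∀ f g : F, D (f * g) = D f * g + f * D g)
    (sect : ∀ f : F, D (I f) = f) :
    (∀ f g : F, I (D f) * I (D g) + I (D (f * g)) = I (D f) * g + f * I (D g)) ↔
      (∀ f g : F, f * I g = I (f * g) + I (D f * I g)) := by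
  constructor
  · intro hB f g
    have h := hB f (I g)
    rw [sect] at h
    have h2 : D (f * I g) = D f * I g + f * g := by rw [leibniz, sect]
    rw [h2, map_add] at h
    linear_combination -h
  · intro hI f g
    have h1 := hI (I (D f)) (D g)
    rw [sect, mul_comm (I (D f)) (D g)] at h1
    have h2 := hI g (D f)
    have h3 := hI f (D g)
    rw [leibniz f g, map_add, mul_comm (D f) g]
    linear_combination h1 - h2 - h3
end

section
/- Let (F, ∂, ∫) be an integro-differential algebra over a commutative ring K with evaluation e = id_F − ∫∘∂. Then the evaluation variant of integration by parts holds: ∫(f·∂g) = f·g − ∫((∂f)·g) − e(f)·e(g) for all f, g ∈ F. -/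
/-- In an integro-differential algebra `(F, ∂, ∫)` over a commutative
ring `K`, with evaluation `e = id − ∫∘∂`, the evaluation variant of integration by parts
holds: `∫(f·∂g) = f·g − ∫((∂f)·g) − e(f)·e(g)`. -/
theorem stmt_6 (K : Type*) [CommRing K] (F : Type*) [CommRing F] [Algebra K F]
    (D I : F →ₗ[K] F)
    (leibniz : ∀ f g : F, D (f * g) = D f * g + f * D g)
    (sect : ∀ f : F, D (I f) = f)
    (diffBaxter : ∀ f g : F,
      I (D f) * I (D g) + I (D (f * g)) = I (D f) * g + f * I (D g)) :
    ∀ f g : F, I (f * D g) = f * g - I (D f * g) - (f - I (D f)) * (g - I (D g)) := by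
  intro f g
  have h1 : I (D (f * g)) = I (D f * g) + I (f * D g) := by
    rw [leibniz, map_add]
  have h2 := diffBaxter f g
  rw [h1] at h2
  linear_combination h2
end

section
/- Let K be a commutative ring, F a commutative K-algebra, ∂ : F → F a K-linear map satisfying the Leibniz rule ∂(fg) = (∂f)·g + f·(∂g), and ∫ : F → F a K-linear section of ∂ (i.e. ∂(∫f) = f for all f). Then ∫ satisfies the pure Baxter axiom (∫f)·(∫g) = ∫(f·∫g) + ∫(g·∫f) for all f, g ∈ F if and only if the range of ∫ is closed under multiplication (a subalgebra of F). In particular, if ∫ in addition satisfies the differential Baxter axiom (∫∂f)·(∫∂g) + ∫∂(fg) = (∫∂f)·g + f·(∫∂g), then ∫ satisfies the pure Baxter axiom (so (F, ∫) is a Rota-Baxter algebra of weight zero). -/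
/-- For a commutative differential algebra `(F, ∂)` over a commutative
ring `K` with a `K`-linear section `∫` of `∂`: `∫` satisfies the pure Baxter axiom iff
the range of `∫` is closed under multiplication; in particular the differential Baxter
axiom implies the pure Baxter axiom. -/
theorem stmt_7 (K : Type*) [CommRing K] (F : Type*) [CommRing F] [Algebra K F]
    (D I : F →ₗ[K] F)
    (leibniz : ∀ f g : F, D (f * g) = D f * g + f * D g)
    (sect : ∀ f : F, D (I f) = f) :
    ((∀ f g : F, I f * I g = I (f * I g) + I (g * I f)) ↔
      (∀ x y : F, x ∈ Set.range (⇑I) → y ∈ Set.range (⇑I) → x * y ∈ Set.range (⇑I))) ∧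
    ((∀ f g : F, I (D f) * I (D g) + I (D (f * g)) = I (D f) * g + f * I (D g)) →
      ∀ f g : F, I f * I g = I (f * I g) + I (g * I f)) := by
  have key : ∀ f g : F, D (I f * I g) = f * I g + g * I f := by
    intro f g
    rw [leibniz, sect, sect, mul_comm (I f) g]
  constructor
  · constructor
    · rintro h x y ⟨f, rfl⟩ ⟨g, rfl⟩
      exact ⟨f * I g + g * I f, by rw [map_add, ← h]⟩
    · intro h f g
      obtain ⟨p, hp⟩ := h (I f) (I g) ⟨f, rfl⟩ ⟨g, rfl⟩
      have : p = f * I g + g * I f := by rw [← key f g, ← hp, sect]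
      rw [← hp, this, map_add]
  · intro h f g
    have := h (I f) (I g)
    rw [sect, sect, key, map_add] at this
    linear_combination -this
end

section
/- Let K be a commutative ring, F a commutative K-algebra, ∂ : F → F a K-linear map satisfying the Leibniz rule ∂(fg) = (∂f)·g + f·(∂g), and ∫ : F → F a K-linear section of ∂ (i.e. ∂(∫f) = f for all f). Then ∫ satisfies the differential Baxter axiom (∫∂f)·(∫∂g) + ∫∂(fg) = (∫∂f)·g + f·(∫∂g) for all f, g ∈ F if and only if ∫ satisfies the pure Baxter axiom (∫f)·(∫g) = ∫(f·∫g) + ∫(g·∫f) for all f, g ∈ F and ∫ is linear over the constants, i.e. ∫(c·g) = c·∫(g) for all c ∈ ker ∂ and g ∈ F. -/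
/-- For a commutative differential algebra `(F, ∂)` over a commutative
ring `K` with a `K`-linear section `∫` of `∂`: the differential Baxter axiom holds iff
the pure Baxter axiom holds and `∫` is linear over the constants `ker ∂`. -/
theorem stmt_8 (K : Type*) [CommRing K] (F : Type*) [CommRing F] [Algebra K F]
    (D I : F →ₗ[K] F)
    (leibniz : ∀ f g : F, D (f * g) = D f * g + f * D g)
    (sect : ∀ f : F, D (I f) = f) :
    (∀ f g : F, I (D f) * I (D g) + I (D (f * g)) = I (D f) * g + f * I (D g)) ↔
      ((∀ f g : F, I f * I g = I (f * I g) + I (g * I f)) ∧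
        ∀ c ∈ LinearMap.ker D, ∀ g : F, I (c * g) = c * I g) := by
  constructor
  · intro h
    constructor
    · intro f g
      have hfg := h (I f) (I g)
      rw [sect, sect, leibniz, sect, sect, map_add, mul_comm (I f) g] at hfg
      linear_combination -hfg
    · intro c hc g
      have hcg := h c (I g)
      rw [LinearMap.mem_ker.mp hc, map_zero, sect, leibniz, LinearMap.mem_ker.mp hc,
        sect] at hcg
      simpa using hcg
  · rintro ⟨hb, hc⟩ f g
    have hcf : f - I (D f) ∈ LinearMap.ker D := by
      simp [LinearMap.mem_ker, map_sub, sect]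
    have hcg : g - I (D g) ∈ LinearMap.ker D := by
      simp [LinearMap.mem_ker, map_sub, sect]
    have h1 : I (D f * g) = (g - I (D g)) * I (D f) + I (D f * I (D g)) := by
      have e : D f * g = (g - I (D g)) * D f + D f * I (D g) := by ring
      rw [e, map_add, hc _ hcg]
    have h2 : I (f * D g) = (f - I (D f)) * I (D g) + I (D g * I (D f)) := by
      have e : f * D g = (f - I (D f)) * D g + D g * I (D f) := by ring
      rw [e, map_add, hc _ hcf]
    rw [leibniz, map_add, h1, h2]
    linear_combination - hb (D f) (D g)
end

section
/- Let K be a field and (F, ∂) an ordinary commutative differential K-algebra, i.e. dim_K ker ∂ = 1, and let ∫ : F → F be a K-linear section of ∂ (i.e. ∂(∫f) = f for all f). Then: (a) the constants coincide with the ground field, i.e. ker ∂ = K·1 (the range of the algebra map K → F); (b) ∫ satisfies the pure Baxter axiom (∫f)·(∫g) = ∫(f·∫g) + ∫(g·∫f) for all f, g ∈ F if and only if it satisfies the differential Baxter axiom (∫∂f)·(∫∂g) + ∫∂(fg) = (∫∂f)·g + f·(∫∂g) for all f, g ∈ F. -/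
/-- Let `K` be a field, `(F, ∂)` an ordinary commutative differential
`K`-algebra (`dim_K ker ∂ = 1`) and `∫` a `K`-linear section of `∂`.  Then
(a) `ker ∂` is the range of the algebra map `K → F`, and
(b) the pure Baxter axiom holds iff the differential Baxter axiom holds. -/
theorem stmt_9 (K : Type*) [Field K] (F : Type*) [CommRing F] [Algebra K F]
    (D I : F →ₗ[K] F)
    (leibniz : ∀ f g : F, D (f * g) = D f * g + f * D g)
    (ordinary : Module.finrank K (LinearMap.ker D) = 1)
    (sect : ∀ f : F, D (I f) = f) :
    LinearMap.ker D = LinearMap.range (Algebra.linearMap K F) ∧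
    ((∀ f g : F, I f * I g = I (f * I g) + I (g * I f)) ↔
      (∀ f g : F, I (D f) * I (D g) + I (D (f * g)) = I (D f) * g + f * I (D g))) := by
  -- D 1 = 0
  have hD1 : D 1 = 0 := by
    simpa using leibniz 1 1
  -- F is nontrivial
  have hnt : Nontrivial F := by
    by_contra h
    rw [not_nontrivial_iff_subsingleton] at h
    have : Module.finrank K (LinearMap.ker D) = 0 := Module.finrank_zero_of_subsingleton
    omega
  have hle : LinearMap.range (Algebra.linearMap K F) ≤ LinearMap.ker D := by
    rintro x ⟨a, rfl⟩
    simp only [LinearMap.mem_ker, Algebra.linearMap_apply, Algebra.algebraMap_eq_smul_one,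
      map_smul, hD1, smul_zero]
  have hinj : Function.Injective (Algebra.linearMap K F) := by
    intro x y hxy
    exact (algebraMap K F).injective hxy
  have hfd : FiniteDimensional K (LinearMap.ker D) :=
    FiniteDimensional.of_finrank_pos (by omega)
  have hrank : Module.finrank K (LinearMap.range (Algebra.linearMap K F)) =
      Module.finrank K (LinearMap.ker D) := by
    rw [LinearMap.finrank_range_of_inj hinj, Module.finrank_self, ordinary]
  have ha : LinearMap.ker D = LinearMap.range (Algebra.linearMap K F) :=
    (Submodule.eq_of_le_of_finrank_eq hle hrank).symm
  refine ⟨ha, ?_⟩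
  -- key: every element is I (D h) plus a constant
  have key : ∀ h : F, ∃ a : K, h = I (D h) + algebraMap K F a := by
    intro h
    have hmem : h - I (D h) ∈ LinearMap.ker D := by
      simp [LinearMap.mem_ker, map_sub, sect]
    rw [ha] at hmem
    obtain ⟨a, haa⟩ := hmem
    simp only [Algebra.linearMap_apply] at haa
    exact ⟨a, by linear_combination -haa⟩
  constructor
  · intro baxter f g
    obtain ⟨a, hf⟩ := key f
    obtain ⟨b, hg⟩ := key g
    have e : D f * g + f * D g = D f * I (D g) + D g * I (D f)
        + algebraMap K F b * D f + algebraMap K F a * D g := by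
      linear_combination D f * hg + D g * hf
    have hI : I (D (f * g)) = I (D f * I (D g)) + I (D g * I (D f))
        + algebraMap K F b * I (D f) + algebraMap K F a * I (D g) := by
      rw [leibniz, e]
      rw [map_add, map_add, map_add, ← Algebra.smul_def, ← Algebra.smul_def,
        map_smul, map_smul, Algebra.smul_def, Algebra.smul_def]
    have hbax := baxter (D f) (D g)
    linear_combination hI - hbax - I (D g) * hf - I (D f) * hg
  · intro dbax f g
    have h := dbax (I f) (I g)
    have h2 : D (I f * I g) = f * I g + g * I f := by
      rw [leibniz, sect, sect]; ring
    rw [h2, map_add] at h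
    simp only [sect] at h
    linear_combination -h
end

section
/- Let K be a field, (F, ∂) an ordinary commutative differential K-algebra (dim_K ker ∂ = 1), and ∫ : F → F a K-linear section of ∂. Then the following are equivalent: (1) ∫ satisfies the differential Baxter axiom (∫∂f)·(∫∂g) + ∫∂(fg) = (∫∂f)·g + f·(∫∂g) for all f, g ∈ F; (2) there is a K-algebra homomorphism φ : F → K such that the evaluation e = id_F − ∫∘∂ equals the composite of φ with the algebra map K → F; (3) the range of ∫ is the kernel of some K-algebra homomorphism F → K (an augmentation ideal). -/
/-- Let `K` be a field, `(F, ∂)` an ordinary commutative differential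
`K`-algebra (`dim_K ker ∂ = 1`) and `∫` a `K`-linear section of `∂`.  TFAE:
(1) the differential Baxter axiom; (2) the evaluation `e = id − ∫∘∂` is (the algebra map
`K → F` composed with) a character `φ : F → K`; (3) the range of `∫` is the kernel of
a character `F → K` (an augmentation ideal). -/
theorem stmt_10 (K : Type*) [Field K] (F : Type*) [CommRing F] [Algebra K F]
    (D I : F →ₗ[K] F)
    (leibniz : ∀ f g : F, D (f * g) = D f * g + f * D g)
    (ordinary : Module.finrank K (LinearMap.ker D) = 1)
    (sect : ∀ f : F, D (I f) = f) :
    List.TFAE [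
      ∀ f g : F, I (D f) * I (D g) + I (D (f * g)) = I (D f) * g + f * I (D g),
      ∃ φ : F →ₐ[K] K, ∀ f : F, f - I (D f) = algebraMap K F (φ f),
      ∃ φ : F →ₐ[K] K, LinearMap.range I = LinearMap.ker φ.toLinearMap
    ] := by
  have hD1 : D 1 = 0 := by
    have := leibniz 1 1
    simp only [mul_one, one_mul] at this
    linear_combination - this
  have hF : Nontrivial F := by
    by_contra h
    rw [not_nontrivial_iff_subsingleton] at h
    have : Subsingleton (LinearMap.ker D) := by infer_instance
    rw [Module.finrank_zero_of_subsingleton] at ordinary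
    exact one_ne_zero ordinary.symm
  have hinj : Function.Injective (algebraMap K F) := (algebraMap K F).injective
  -- ker D = K · 1
  have hker : ∀ f : F, D f = 0 → ∃ c : K, algebraMap K F c = f := by
    intro f hf
    set v : LinearMap.ker D := ⟨1, by simpa using hD1⟩ with hv
    have hvne : v ≠ 0 := by
      intro h
      apply one_ne_zero (α := F)
      exact congrArg Subtype.val h
    have hspan : Submodule.span K {v} = ⊤ :=
      (finrank_eq_one_iff_of_nonzero v hvne).mp ordinary
    have hmem : (⟨f, hf⟩ : LinearMap.ker D) ∈ Submodule.span K {v} := by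
      rw [hspan]; trivial
    obtain ⟨c, hc⟩ := Submodule.mem_span_singleton.mp hmem
    refine ⟨c, ?_⟩
    have : c • (1 : F) = f := congrArg Subtype.val hc
    rw [Algebra.algebraMap_eq_smul_one]
    exact this
  have hexists : ∀ f : F, ∃ c : K, algebraMap K F c = f - I (D f) := by
    intro f
    exact hker _ (by simp [map_sub, sect])
  tfae_have 1 → 2
  | h1 => by
    choose c hc using hexists
    have hone : c 1 = 1 := by
      apply hinj
      rw [hc, hD1, map_zero, map_one]; ring
    have hmul : ∀ f g, c (f * g) = c f * c g := by
      intro f g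
      apply hinj
      rw [map_mul, hc, hc, hc]
      linear_combination - h1 f g
    -- c is linear
    have hadd : ∀ f g, c (f + g) = c f + c g := by
      intro f g
      apply hinj
      rw [map_add, hc, hc, hc, map_add, map_add]; ring
    have hsmul : ∀ (k : K) (f : F), c (k • f) = k • c f := by
      intro k f
      apply hinj
      rw [hc, map_smul, map_smul, smul_eq_mul, map_mul, hc]
      rw [Algebra.smul_def, Algebra.smul_def]
      ring
    exact ⟨AlgHom.ofLinearMap
      { toFun := c, map_add' := hadd, map_smul' := hsmul } hone hmul,
      fun f => (hc f).symm⟩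
  tfae_have 2 → 1
  | ⟨φ, h⟩ => by
    intro f g
    have e1 : I (D f) = f - algebraMap K F (φ f) := by linear_combination - h f
    have e2 : I (D g) = g - algebraMap K F (φ g) := by linear_combination - h g
    have e3 : I (D (f * g)) = f * g - algebraMap K F (φ f) * algebraMap K F (φ g) := by
      rw [← map_mul, ← map_mul]
      linear_combination - h (f * g)
    rw [e1, e2, e3]; ring
  tfae_have 2 → 3
  | ⟨φ, h⟩ => by
    refine ⟨φ, ?_⟩
    ext x
    simp only [LinearMap.mem_range, LinearMap.mem_ker, AlgHom.toLinearMap_apply]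
    constructor
    · rintro ⟨y, rfl⟩
      apply hinj
      rw [map_zero]
      have := h (I y)
      rw [sect] at this
      linear_combination - this
    · intro hx
      refine ⟨D x, ?_⟩
      have := h x
      rw [hx, map_zero] at this
      linear_combination - this
  tfae_have 3 → 2
  | ⟨φ, h⟩ => by
    refine ⟨φ, fun f => ?_⟩
    obtain ⟨cf, hcf⟩ := hexists f
    have hIm : φ (I (D f)) = 0 := by
      have : I (D f) ∈ LinearMap.ker φ.toLinearMap := by
        rw [← h]; exact ⟨D f, rfl⟩
      simpa using this
    have : φ (f - I (D f)) = cf := by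
      rw [← hcf]
      simp [AlgHom.commutes]
    rw [map_sub, hIm, sub_zero] at this
    rw [← hcf, this]
  tfae_finish
end

section
/- Let K be a field, (F, ∂, ∫) an ordinary integro-differential algebra over K (dim_K ker ∂ = 1) with evaluation e = id_F − ∫∘∂. Let n ≥ 1, let c₀, …, c_{n−1} ∈ F, and define the K-linear map T : F → F by T(u) = ∂ⁿ(u) + Σ_{i=0}^{n−1} c_i·∂ⁱ(u). Let u₁, …, uₙ ∈ F satisfy T(u_j) = 0 for all j and ker T ⊆ span_K{u₁, …, uₙ}, and suppose the Wronskian matrix W ∈ Matrix(Fin n, Fin n, F) with entries W_{i,j} = ∂ⁱ(u_j) (0 ≤ i ≤ n−1) has invertible determinant d = det W in F. For each i let d_i be the determinant of the matrix obtained from W by replacing its i-th column by the n-th standard basis vector (0, …, 0, 1)ᵀ. Then for every f ∈ F, the element u = Σ_{i=1}^{n} u_i·∫(d⁻¹·d_i·f) is the unique element of F satisfying T(u) = f and e(∂ⁱ(u)) = 0 for all 0 ≤ i ≤ n−1. -/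
/-!
Variation of constants. By Cramer's rule the coefficients `gᵢ = ∫(d⁻¹dᵢf)` satisfy
`W · (∂g₁, …, ∂gₙ)ᵀ = (0, …, 0, f)ᵀ`, so `∂ᵏ(∑ uᵢgᵢ) = ∑ ∂ᵏuᵢ · gᵢ` for `k < n` while `∂ⁿ`
picks up the extra term `f`; hence `T(∑ uᵢgᵢ) = ∑ T(uᵢ)gᵢ + f = f`. The initial values vanish
because the evaluation `e` is multiplicative and kills the image of `∫`.
For uniqueness, two solutions differ by some `∑ aⱼuⱼ` with `aⱼ ∈ K`, whose initial values form the
vector `e(W)·a`; as `det e(W) = e(det W)` is a unit, `a = 0`.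
-/

section Evaluation

variable {K F : Type*} [CommRing K] [CommRing F] [Algebra K F] (D I : F →ₗ[K] F)

theorem map_one_eq_zero_of_leibniz (leibniz : ∀ f g : F, D (f * g) = D f * g + f * D g) :
    D 1 = 0 := by
  simpa using leibniz 1 1

/-- The differential Baxter axiom says exactly that `e = id - ∫∘∂` is multiplicative. -/
def evaluation (leibniz : ∀ f g : F, D (f * g) = D f * g + f * D g)
    (diffBaxter : ∀ f g : F,
      I (D f) * I (D g) + I (D (f * g)) = I (D f) * g + f * I (D g)) : F →ₐ[K] F :=
  AlgHom.ofLinearMap (LinearMap.id - I ∘ₗ D)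
    (by simp [map_one_eq_zero_of_leibniz D leibniz])
    (fun f g => by
      simp only [LinearMap.sub_apply, LinearMap.id_apply, LinearMap.comp_apply]
      linear_combination -diffBaxter f g)

variable {D I} {leibniz : ∀ f g : F, D (f * g) = D f * g + f * D g}
  {diffBaxter : ∀ f g : F, I (D f) * I (D g) + I (D (f * g)) = I (D f) * g + f * I (D g)}

theorem evaluation_apply (f : F) : evaluation D I leibniz diffBaxter f = f - I (D f) := rfl

theorem evaluation_integral (sect : ∀ f : F, D (I f) = f) (f : F) :
    evaluation D I leibniz diffBaxter (I f) = 0 := by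
  rw [evaluation_apply, sect, sub_self]

end Evaluation

section VariationOfConstants

variable {K F ι : Type*} [CommRing K] [CommRing F] [Algebra K F] [Fintype ι] {D : F →ₗ[K] F}

theorem pow_succ_apply_sum_mul (leibniz : ∀ f g : F, D (f * g) = D f * g + f * D g)
    {u g : ι → F} {k : ℕ} (hk : (D ^ k) (∑ i, u i * g i) = ∑ i, (D ^ k) (u i) * g i) :
    (D ^ (k + 1)) (∑ i, u i * g i) =
      ∑ i, (D ^ (k + 1)) (u i) * g i + ∑ i, (D ^ k) (u i) * D (g i) := by
  rw [pow_succ', Module.End.mul_apply, hk, map_sum]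
  simp only [leibniz, Finset.sum_add_distrib, Module.End.mul_apply]

theorem pow_apply_sum_mul_of_forall_lt (leibniz : ∀ f g : F, D (f * g) = D f * g + f * D g)
    {u g : ι → F} {m : ℕ} (h : ∀ k < m, ∑ i, (D ^ k) (u i) * D (g i) = 0) :
    ∀ k ≤ m, (D ^ k) (∑ i, u i * g i) = ∑ i, (D ^ k) (u i) * g i := by
  intro k hk
  induction k with
  | zero => simp
  | succ k ih =>
    rw [pow_succ_apply_sum_mul leibniz (ih (by omega)), h k (by omega), add_zero]

theorem pow_apply_sum_mul_of_sum_pow_apply_mul_eq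
    (leibniz : ∀ f g : F, D (f * g) = D f * g + f * D g) {n : ℕ} (hn : 0 < n)
    {u g : ι → F} {f : F}
    (h : ∀ k < n, ∑ i, (D ^ k) (u i) * D (g i) = if k + 1 = n then f else 0) :
    (∀ k < n, (D ^ k) (∑ i, u i * g i) = ∑ i, (D ^ k) (u i) * g i) ∧
      (D ^ n) (∑ i, u i * g i) = ∑ i, (D ^ n) (u i) * g i + f := by
  obtain ⟨m, rfl⟩ : ∃ m, n = m + 1 := ⟨n - 1, by omega⟩
  have hlow := pow_apply_sum_mul_of_forall_lt leibniz (m := m)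
    fun k hk => by simpa [hk.ne] using h k (by omega)
  refine ⟨fun k hk => hlow k (by omega), ?_⟩
  rw [pow_succ_apply_sum_mul leibniz (hlow m le_rfl), h m (by omega), if_pos rfl]

end VariationOfConstants

section LinearDiffOp

variable {K F : Type*} [CommRing K] [CommRing F] [Algebra K F]

def linearDiffOp (D : F →ₗ[K] F) {n : ℕ} (c : Fin n → F) : F →ₗ[K] F :=
  D ^ n + ∑ i, LinearMap.mulLeft K (c i) ∘ₗ D ^ (i : ℕ)

variable {D : F →ₗ[K] F} {n : ℕ} {c : Fin n → F}

theorem linearDiffOp_apply (v : F) :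
    linearDiffOp D c v = (D ^ n) v + ∑ i, c i * (D ^ (i : ℕ)) v := by
  simp [linearDiffOp]

theorem linearDiffOp_apply_of_pow_apply {ι : Type*} [Fintype ι] {u g : ι → F} {s f : F}
    (hlow : ∀ k < n, (D ^ k) s = ∑ j, (D ^ k) (u j) * g j)
    (htop : (D ^ n) s = ∑ j, (D ^ n) (u j) * g j + f) :
    linearDiffOp D c s = ∑ j, linearDiffOp D c (u j) * g j + f := by
  simp only [linearDiffOp_apply, htop, fun i : Fin n => hlow i i.isLt, Finset.mul_sum,
    add_mul, Finset.sum_add_distrib, Finset.sum_mul]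
  rw [Finset.sum_comm]
  simp only [mul_assoc]
  ring

end LinearDiffOp

theorem Matrix.mulVec_inverse_det_smul_cramer {n R : Type*} [Fintype n] [DecidableEq n]
    [CommRing R] {A : Matrix n n R} (hA : IsUnit A.det) (b : n → R) :
    A.mulVec (Ring.inverse A.det • A.cramer b) = b := by
  rw [mulVec_smul, mulVec_cramer, smul_smul, Ring.inverse_mul_cancel _ hA, one_smul]

theorem Matrix.cramer_single {n R : Type*} [Fintype n] [DecidableEq n] [CommRing R]
    (A : Matrix n n R) (p : n) (f : R) :
    A.cramer (Pi.single p f) = fun i => f * (A.updateCol i (Pi.single p 1)).det := by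
  rw [← mul_one f, ← smul_eq_mul, Pi.single_smul', map_smul]
  ext i
  simp [cramer_apply]

theorem eq_zero_of_mem_span_of_isUnit_det {K F ι : Type*} [CommRing K] [CommRing F] [Algebra K F]
    [Fintype ι] [DecidableEq ι] {L : ι → F →ₗ[K] F} {u : ι → F}
    (hL : IsUnit (Matrix.of fun k j => L k (u j)).det) {w : F}
    (hw : w ∈ Submodule.span K (Set.range u)) (hLw : ∀ k, L k w = 0) : w = 0 := by
  obtain ⟨a, rfl⟩ := (Submodule.mem_span_range_iff_exists_fun K).mp hw
  have ha : (Matrix.of fun k j => L k (u j)).mulVec (fun j => algebraMap K F (a j)) = 0 := by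
    ext k
    have hk := hLw k
    simp only [map_sum, map_smul] at hk
    simpa [Matrix.mulVec, dotProduct, Algebra.smul_def, mul_comm] using hk
  have ha0 := Matrix.mulVec_injective_of_isUnit
    ((Matrix.isUnit_iff_isUnit_det _).mpr hL) (ha.trans (Matrix.mulVec_zero _).symm)
  simp [Algebra.smul_def, fun j => congrFun ha0 j]

theorem stmt_11 (K : Type*) [Field K] (F : Type*) [CommRing F] [Algebra K F]
    (D I : F →ₗ[K] F)
    (leibniz : ∀ f g : F, D (f * g) = D f * g + f * D g)
    (sect : ∀ f : F, D (I f) = f)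
    (diffBaxter : ∀ f g : F,
      I (D f) * I (D g) + I (D (f * g)) = I (D f) * g + f * I (D g))
    (n : ℕ) (hn : 1 ≤ n) (c : Fin n → F)
    (T : F → F)
    (hT : ∀ v : F, T v = (D ^ n) v + ∑ i : Fin n, c i * (D ^ (i : ℕ)) v)
    (u : Fin n → F)
    (hu : ∀ j, T (u j) = 0)
    (hker : ∀ v : F, T v = 0 → v ∈ Submodule.span K (Set.range u))
    (W : Matrix (Fin n) (Fin n) F)
    (hW : ∀ i j, W i j = (D ^ (i : ℕ)) (u j))
    (hd : IsUnit W.det)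
    (di : Fin n → F)
    (hdi : ∀ i : Fin n,
      di i = (W.updateCol i (Pi.single (⟨n - 1, by omega⟩ : Fin n) 1)).det)
    (f : F) :
    T (∑ i : Fin n, u i * I (Ring.inverse W.det * di i * f)) = f ∧
    (∀ k < n, (D ^ k) (∑ i : Fin n, u i * I (Ring.inverse W.det * di i * f)) -
        I (D ((D ^ k) (∑ i : Fin n, u i * I (Ring.inverse W.det * di i * f)))) = 0) ∧
    ∀ v : F, T v = f → (∀ k < n, (D ^ k) v - I (D ((D ^ k) v)) = 0) →
      v = ∑ i : Fin n, u i * I (Ring.inverse W.det * di i * f) := by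
  set p : Fin n := ⟨n - 1, by omega⟩
  set E := evaluation D I leibniz diffBaxter
  have hTL : T = linearDiffOp D c := funext fun v => (hT v).trans (linearDiffOp_apply v).symm
  have hDg : (fun i => D (I (Ring.inverse W.det * di i * f))) =
      Ring.inverse W.det • W.cramer (Pi.single p f) := by
    ext i
    simp [sect, hdi, Matrix.cramer_single, mul_comm, mul_left_comm]
  have hsum : ∀ k < n, ∑ i, (D ^ k) (u i) * D (I (Ring.inverse W.det * di i * f)) =
      if k + 1 = n then f else 0 := fun k hk => by
    have hk' := congrFun (Matrix.mulVec_inverse_det_smul_cramer hd (Pi.single p f)) ⟨k, hk⟩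
    rw [← hDg] at hk'
    simp only [Matrix.mulVec, dotProduct, hW, Pi.single_apply, Fin.ext_iff, p] at hk'
    simpa [show k = n - 1 ↔ k + 1 = n by omega] using hk'
  obtain ⟨hlow, htop⟩ := pow_apply_sum_mul_of_sum_pow_apply_mul_eq leibniz hn hsum
  set s := ∑ i : Fin n, u i * I (Ring.inverse W.det * di i * f)
  have hTs : T s = f := by
    rw [hTL, linearDiffOp_apply_of_pow_apply hlow htop]
    simp [← hTL, hu]
  have hinit : ∀ k < n, E ((D ^ k) s) = 0 := fun k hk => by
    simp [hlow k hk, map_sum, E, evaluation_integral sect]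
  refine ⟨hTs, hinit, fun v hv hv0 => ?_⟩
  have hker' := hker (v - s) (by rw [hTL, map_sub, ← hTL, hv, hTs, sub_self])
  refine (sub_eq_zero.mp (eq_zero_of_mem_span_of_isUnit_det
    (L := fun k : Fin n => E.toLinearMap ∘ₗ D ^ (k : ℕ)) ?_ hker' fun k => ?_))
  · have hEW : (Matrix.of fun (k : Fin n) j => (E.toLinearMap ∘ₗ D ^ (k : ℕ)) (u j)) =
        E.mapMatrix W := by
      ext k j
      simp [hW]
    rw [hEW, ← AlgHom.map_det]
    exact hd.map E
  · simp only [LinearMap.comp_apply, AlgHom.toLinearMap_apply, map_sub, hinit k k.isLt, sub_zero]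
    exact hv0 k k.isLt
end

section
/- Let K be a field, (F, ∂, ∫) an ordinary integro-differential algebra over K (dim_K ker ∂ = 1) with evaluation e = id_F − ∫∘∂. Let λ₁, …, λₙ ∈ K be pairwise distinct, and let u₁, …, uₙ be invertible elements of F with ∂(u_i) = λ_i·u_i and e(u_i) = 1 for each i. Define T : F → F as the composite T = (∂ − λ₁)∘⋯∘(∂ − λₙ), where (∂ − λ)(u) = ∂(u) − λ·u, and set μ_i = (∏_{j ≠ i}(λ_i − λ_j))⁻¹ ∈ K. Then for every f ∈ F, the element v = Σ_{i=1}^{n} μ_i·u_i·∫(u_i⁻¹·f) satisfies T(v) = f and e(∂ᵏ(v)) = 0 for all 0 ≤ k ≤ n−1. -/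
open Polynomial Finset

lemma lag_basis_eq {K : Type*} [Field K] {n : ℕ} (lam : Fin n → K) (i : Fin n) :
    Lagrange.basis Finset.univ lam i =
      C ((∏ j ∈ Finset.univ.erase i, (lam i - lam j))⁻¹) *
        ∏ j ∈ Finset.univ.erase i, (X - C (lam j)) := by
  rw [Lagrange.basis]
  simp only [Lagrange.basisDivisor]
  rw [Finset.prod_mul_distrib, ← map_prod, ← Finset.prod_inv_distrib]

lemma lag_one {K : Type*} [Field K] {n : ℕ} (hn : 1 ≤ n)
    (lam : Fin n → K) (hlam : Function.Injective lam) :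
    ∑ i : Fin n, (∏ j ∈ Finset.univ.erase i, (lam i - lam j))⁻¹ •
      ∏ j ∈ Finset.univ.erase i, (X - C (lam j)) = (1 : K[X]) := by
  have h := Lagrange.sum_basis (s := Finset.univ) (v := lam) hlam.injOn
    ⟨⟨0, hn⟩, Finset.mem_univ _⟩
  rw [← h]
  refine (Finset.sum_congr rfl fun i _ => ?_).symm
  rw [lag_basis_eq, ← Polynomial.smul_eq_C_mul]

lemma coeff_prod_erase {K : Type*} [Field K] {n : ℕ} (lam : Fin n → K) (i : Fin n) :
    (∏ j ∈ Finset.univ.erase i, (X - C (lam j))).coeff (n - 1) = 1 := by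
  have hmon : (∏ j ∈ Finset.univ.erase i, (X - C (lam j))).Monic :=
    monic_prod_of_monic _ _ fun j _ => monic_X_sub_C _
  have hdeg : (∏ j ∈ Finset.univ.erase i, (X - C (lam j))).natDegree = n - 1 := by
    rw [natDegree_prod_of_monic _ _ fun j _ => monic_X_sub_C _]
    simp [Finset.card_erase_of_mem]
  have := hmon.coeff_natDegree
  rwa [hdeg] at this

lemma lag_pow {K : Type*} [Field K] {n : ℕ}
    (lam : Fin n → K) (hlam : Function.Injective lam) (m : ℕ) (hm : m < n - 1) :
    ∑ i : Fin n, (∏ j ∈ Finset.univ.erase i, (lam i - lam j))⁻¹ * lam i ^ m = 0 := by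
  have hdeg : (X ^ m : K[X]).degree < (Finset.univ : Finset (Fin n)).card := by
    rw [Polynomial.degree_X_pow, Finset.card_univ, Fintype.card_fin]
    exact_mod_cast (by omega : m < n)
  have h := Lagrange.eq_interpolate (f := (X ^ m : K[X])) hlam.injOn hdeg
  have h2 := congrArg (fun p => Polynomial.coeff p (n - 1)) h
  simp only [Lagrange.interpolate_apply, Polynomial.finset_sum_coeff,
    Polynomial.coeff_X_pow, lag_basis_eq, Polynomial.eval_pow, Polynomial.eval_X,
    ← mul_assoc, ← Polynomial.C_mul, Polynomial.coeff_C_mul,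
    coeff_prod_erase, mul_one] at h2
  rw [if_neg (by omega)] at h2
  rw [show ∑ i : Fin n, (∏ j ∈ Finset.univ.erase i, (lam i - lam j))⁻¹ * lam i ^ m
      = ∑ i : Fin n, lam i ^ m * (∏ j ∈ Finset.univ.erase i, (lam i - lam j))⁻¹ from
    Finset.sum_congr rfl fun i _ => mul_comm _ _, ← h2]



/-- In an ordinary integro-differential algebra `(F, ∂, ∫)` over a
field `K`, let `λ₁, …, λₙ ∈ K` be pairwise distinct and `u₁, …, uₙ ∈ F` invertible
with `∂uᵢ = λᵢuᵢ` and `e(uᵢ) = 1`.  With `T = (∂−λ₁)∘⋯∘(∂−λₙ)` and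
`μᵢ = (∏_{j≠i}(λᵢ−λⱼ))⁻¹`, for every `f` the element `v = Σᵢ μᵢ·uᵢ·∫(uᵢ⁻¹·f)`
satisfies `T v = f` and `e(∂ᵏv) = 0` for `0 ≤ k ≤ n−1`. -/
theorem stmt_12 (K : Type*) [Field K] (F : Type*) [CommRing F] [Algebra K F]
    (D I : F →ₗ[K] F)
    (leibniz : ∀ f g : F, D (f * g) = D f * g + f * D g)
    (sect : ∀ f : F, D (I f) = f)
    (diffBaxter : ∀ f g : F,
      I (D f) * I (D g) + I (D (f * g)) = I (D f) * g + f * I (D g))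
    (ordinary : Module.finrank K (LinearMap.ker D) = 1)
    (n : ℕ) (hn : 1 ≤ n)
    (lam : Fin n → K) (hlam : Function.Injective lam)
    (u : Fin n → F)
    (hinv : ∀ i, IsUnit (u i))
    (hDu : ∀ i, D (u i) = lam i • u i)
    (heval : ∀ i, u i - I (D (u i)) = 1)
    (T : F → F)
    (hT : ∀ v : F,
      T v = (List.ofFn fun i : Fin n => D - lam i • (LinearMap.id : F →ₗ[K] F)).prod v)
    (mu : Fin n → K)
    (hmu : ∀ i, mu i = (∏ j ∈ Finset.univ.erase i, (lam i - lam j))⁻¹)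
    (f : F) :
    T (∑ i : Fin n, mu i • (u i * I (Ring.inverse (u i) * f))) = f ∧
    ∀ k < n, (D ^ k) (∑ i : Fin n, mu i • (u i * I (Ring.inverse (u i) * f))) -
        I (D ((D ^ k) (∑ i : Fin n, mu i • (u i * I (Ring.inverse (u i) * f))))) = 0 := by
  classical
  set w : Fin n → F := fun i => u i * I (Ring.inverse (u i) * f) with hw
  -- first-order ODE satisfied by each w i
  have hDw : ∀ i, D (w i) = lam i • w i + f := by
    intro i
    rw [hw]
    simp only
    rw [leibniz, hDu i, sect, smul_mul_assoc, ← mul_assoc,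
      Ring.mul_inverse_cancel _ (hinv i), one_mul]
  -- Part 1
  have part1 : T (∑ i : Fin n, mu i • w i) = f := by
    rw [hT]
    have hlist : (List.ofFn fun i : Fin n => D - lam i • (LinearMap.id : F →ₗ[K] F)).prod
        = (Polynomial.aeval (D : Module.End K F)) (∏ i : Fin n, (X - C (lam i))) := by
      have h1 : (fun i : Fin n => D - lam i • (LinearMap.id : F →ₗ[K] F))
          = (Polynomial.aeval (D : Module.End K F)) ∘ fun i => X - C (lam i) := by
        funext i; ext x; simp [Module.algebraMap_end_apply]
      rw [h1, ← List.map_ofFn, ← map_list_prod (Polynomial.aeval (D : Module.End K F)),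
        List.prod_ofFn]
    rw [hlist]
    have hsingle : ∀ i, (Polynomial.aeval (D : Module.End K F)) (∏ i : Fin n, (X - C (lam i))) (w i)
        = (Polynomial.aeval (D : Module.End K F)) (∏ j ∈ Finset.univ.erase i, (X - C (lam j))) f := by
      intro i
      have hfac : (Polynomial.aeval (D : Module.End K F)) (∏ i : Fin n, (X - C (lam i)))
          = (Polynomial.aeval (D : Module.End K F)) (∏ j ∈ Finset.univ.erase i, (X - C (lam j)))
            * (Polynomial.aeval (D : Module.End K F)) (X - C (lam i)) := by
        rw [← map_mul, Finset.prod_erase_mul Finset.univ _ (Finset.mem_univ i)]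
      rw [hfac, Module.End.mul_apply]
      congr 1
      have : (Polynomial.aeval (D : Module.End K F)) (X - C (lam i)) (w i)
          = D (w i) - lam i • w i := by
        simp [Module.algebraMap_end_apply]
      rw [this, hDw i]
      abel
    rw [map_sum]
    simp only [map_smul, LinearMap.smul_apply, hsingle]
    have : ∑ i : Fin n, mu i • ((Polynomial.aeval (D : Module.End K F))
          (∏ j ∈ Finset.univ.erase i, (X - C (lam j)))) f
        = ((Polynomial.aeval (D : Module.End K F))
          (∑ i : Fin n, mu i • ∏ j ∈ Finset.univ.erase i, (X - C (lam j)))) f := by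
      rw [map_sum]
      simp only [map_smul]
      rw [LinearMap.sum_apply]
      simp only [LinearMap.smul_apply]
    rw [this]
    have hone : (∑ i : Fin n, mu i • ∏ j ∈ Finset.univ.erase i, (X - C (lam j))) = (1 : K[X]) := by
      simp only [hmu]
      exact lag_one hn lam hlam
    rw [hone, map_one, Module.End.one_apply]
  refine ⟨part1, ?_⟩
  -- Part 2
  intro k hk
  set E : F →ₗ[K] F := LinearMap.id - I ∘ₗ D with hEdef
  have hEapp : ∀ x : F, E x = x - I (D x) := by
    intro x; simp [hEdef]
  have hEmul : ∀ a b : F, E (a * b) = E a * E b := by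
    intro a b
    simp only [hEapp]
    linear_combination - diffBaxter a b
  have hEw : ∀ i, E (w i) = 0 := by
    intro i
    show E (u i * I (Ring.inverse (u i) * f)) = 0
    rw [hEmul]
    have h1 : E (u i) = 1 := by rw [hEapp]; exact heval i
    have h2 : E (I (Ring.inverse (u i) * f)) = 0 := by
      rw [hEapp, sect, sub_self]
    rw [h1, h2, mul_zero]
  have stepB : ∀ (i : Fin n) (k : ℕ), (D ^ k) (w i)
      = lam i ^ k • w i + ∑ j ∈ Finset.range k, lam i ^ (k - 1 - j) • (D ^ j) f := by
    intro i k
    induction k with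
    | zero => simp
    | succ k ih =>
      rw [show (D ^ (k + 1) : F →ₗ[K] F) = D * D ^ k from pow_succ' D k,
        Module.End.mul_apply, ih, map_add, map_smul, map_sum, hDw i]
      have hsum : ∀ j : ℕ, D ((D ^ j) f) = (D ^ (j + 1)) f := by
        intro j; rw [show (D ^ (j + 1) : F →ₗ[K] F) = D * D ^ j from pow_succ' D j,
          Module.End.mul_apply]
      simp only [map_smul, hsum]
      rw [Finset.sum_range_succ' (fun j => lam i ^ (k + 1 - 1 - j) • (D ^ j) f) k]
      simp only [pow_zero, Module.End.one_apply, Nat.sub_zero, Nat.add_sub_cancel]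
      rw [smul_add, smul_smul, ← pow_succ]
      have harith : ∀ j ∈ Finset.range k,
          lam i ^ (k - 1 - j) • (D ^ (j + 1)) f = lam i ^ (k - (j + 1)) • (D ^ (j + 1)) f := by
        intro j hj
        rw [Finset.mem_range] at hj
        congr 2
        omega
      rw [Finset.sum_congr rfl harith]
      abel
  simp only [← hEapp]
  show E ((D ^ k) (∑ i : Fin n, mu i • w i)) = 0
  calc E ((D ^ k) (∑ i : Fin n, mu i • w i))
      = ∑ i : Fin n, ∑ j ∈ Finset.range k, (mu i * lam i ^ (k - 1 - j)) • E ((D ^ j) f) := by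
        rw [map_sum, map_sum]
        refine Finset.sum_congr rfl fun i _ => ?_
        rw [map_smul, map_smul, stepB i k, map_add, map_smul, hEw i, smul_zero, zero_add,
          map_sum, Finset.smul_sum]
        exact Finset.sum_congr rfl fun j _ => by rw [map_smul, smul_smul]
    _ = ∑ j ∈ Finset.range k, ∑ i : Fin n, (mu i * lam i ^ (k - 1 - j)) • E ((D ^ j) f) :=
        Finset.sum_comm
    _ = 0 := by
        refine Finset.sum_eq_zero fun j hj => ?_
        rw [← Finset.sum_smul]
        have hz : (∑ i : Fin n, mu i * lam i ^ (k - 1 - j)) = 0 := by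
          simp only [hmu]
          exact lag_pow lam hlam _ (by rw [Finset.mem_range] at hj; omega)
        rw [hz, zero_smul]
end

section
/- Let K be a field and V a K-vector space. If (T₁, B₁) and (T₂, B₂) are regular boundary problems on V with Green's operators G₁ and G₂ respectively, then their composition (T₁∘T₂, B₁·T₂ + B₂) is a regular boundary problem whose Green's operator is G₂∘G₁; that is, for every f ∈ V, the element G₂(G₁(f)) is the unique u ∈ V with T₁(T₂(u)) = f, β(T₂(u)) = 0 for all β ∈ B₁, and β(u) = 0 for all β ∈ B₂. -/
/-- If `(T₁, B₁)` and `(T₂, B₂)` are regular boundary problems on a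
`K`-vector space `V` with Green's operators `G₁`, `G₂`, then the composition
`(T₁∘T₂, B₁·T₂ + B₂)` is a regular boundary problem with Green's operator `G₂∘G₁`:
for every `f`, `G₂(G₁ f)` is the unique `u` with `T₁(T₂ u) = f`, `β(T₂ u) = 0` for all
`β ∈ B₁` and `β(u) = 0` for all `β ∈ B₂`. -/
theorem stmt_13 (K : Type*) [Field K] (V : Type*) [AddCommGroup V] [Module K V]
    (T₁ T₂ : V →ₗ[K] V) (B₁ B₂ : Submodule K (Module.Dual K V))
    (G₁ G₂ : V → V)
    (hreg₁ : ∀ f : V, ∃! u : V, T₁ u = f ∧ ∀ β ∈ B₁, β u = 0)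
    (hreg₂ : ∀ f : V, ∃! u : V, T₂ u = f ∧ ∀ β ∈ B₂, β u = 0)
    (hG₁ : ∀ f : V, T₁ (G₁ f) = f ∧ ∀ β ∈ B₁, β (G₁ f) = 0)
    (hG₂ : ∀ f : V, T₂ (G₂ f) = f ∧ ∀ β ∈ B₂, β (G₂ f) = 0) :
    (∀ f : V, ∃! u : V, T₁ (T₂ u) = f ∧
        ∀ β ∈ Submodule.map T₂.dualMap B₁ ⊔ B₂, β u = 0) ∧
    ∀ f : V,
      (T₁ (T₂ (G₂ (G₁ f))) = f ∧ (∀ β ∈ B₁, β (T₂ (G₂ (G₁ f))) = 0) ∧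
        ∀ β ∈ B₂, β (G₂ (G₁ f)) = 0) ∧
      ∀ u : V, T₁ (T₂ u) = f → (∀ β ∈ B₁, β (T₂ u) = 0) → (∀ β ∈ B₂, β u = 0) →
        u = G₂ (G₁ f) := by

  -- uniqueness helper
  have uniq : ∀ f u : V, T₁ (T₂ u) = f → (∀ β ∈ B₁, β (T₂ u) = 0) →
      (∀ β ∈ B₂, β u = 0) → u = G₂ (G₁ f) := by
    intro f u hT h1 h2
    have hTu : T₂ u = G₁ f := by
      obtain ⟨w, hw, hwu⟩ := hreg₁ f
      rw [hwu (T₂ u) ⟨hT, h1⟩, hwu (G₁ f) ⟨(hG₁ f).1, (hG₁ f).2⟩]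
    obtain ⟨w, hw, hwu⟩ := hreg₂ (G₁ f)
    rw [hwu u ⟨hTu, h2⟩, hwu (G₂ (G₁ f)) ⟨(hG₂ (G₁ f)).1, (hG₂ (G₁ f)).2⟩]
  have gprop : ∀ f : V, T₁ (T₂ (G₂ (G₁ f))) = f ∧
      (∀ β ∈ B₁, β (T₂ (G₂ (G₁ f))) = 0) ∧ ∀ β ∈ B₂, β (G₂ (G₁ f)) = 0 := by
    intro f
    have h2 := hG₂ (G₁ f)
    have h1 := hG₁ f
    rw [h2.1]
    exact ⟨h1.1, h1.2, h2.2⟩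
  constructor
  · intro f
    refine ⟨G₂ (G₁ f), ⟨(gprop f).1, ?_⟩, ?_⟩
    · intro β hβ
      rcases Submodule.mem_sup.mp hβ with ⟨β₁, hβ₁, β₂, hβ₂, rfl⟩
      rcases hβ₁ with ⟨γ, hγ, rfl⟩
      simp only [LinearMap.add_apply, LinearMap.dualMap_apply]
      rw [(gprop f).2.1 γ hγ, (gprop f).2.2 β₂ hβ₂, add_zero]
    · rintro u ⟨hT, hB⟩
      refine uniq f u hT ?_ ?_
      · intro β hβ
        have : T₂.dualMap β ∈ Submodule.map T₂.dualMap B₁ ⊔ B₂ :=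
          Submodule.mem_sup_left ⟨β, hβ, rfl⟩
        exact hB _ this
      · intro β hβ
        exact hB β (Submodule.mem_sup_right hβ)
  · intro f
    exact ⟨gprop f, fun u h1 h2 h3 => uniq f u h1 h2 h3⟩
end

section
/- Let K be a field, V a K-vector space, T : V → V a K-linear map and B ⊆ V* a submodule of the dual space; write B⊥ = {u ∈ V : β(u) = 0 for all β ∈ B}. Suppose G̃ : V → V is a K-linear map with T∘G̃ = id_V, and P : V → V is a K-linear map with P∘P = P, range(P) = ker(T), and ker(P) = B⊥. Then G := (id_V − P)∘G̃ satisfies: for every f ∈ V, G(f) is the unique element u ∈ V with T(u) = f and u ∈ B⊥. In particular, the boundary problem (T, B) is regular and G is its Green's operator. -/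
/-- Let `(T, B)` be a boundary problem on a `K`-vector space `V`.
If `G̃` is a `K`-linear right inverse of `T` and `P` is a projector with range `ker T`
and kernel `B⊥`, then `G = (id − P)∘G̃` solves the problem: for every `f`, `G f` is the
unique `u` with `T u = f` and `β u = 0` for all `β ∈ B`; in particular `(T, B)` is
regular with Green's operator `G`. -/
theorem stmt_14 (K : Type*) [Field K] (V : Type*) [AddCommGroup V] [Module K V]
    (T : V →ₗ[K] V) (B : Submodule K (Module.Dual K V))
    (Gt P : V →ₗ[K] V)
    (hTG : T ∘ₗ Gt = LinearMap.id)
    (hP : P ∘ₗ P = P)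
    (hrange : LinearMap.range P = LinearMap.ker T)
    (hkerP : ∀ u : V, P u = 0 ↔ ∀ β ∈ B, β u = 0) :
    ∀ f : V, (T (Gt f - P (Gt f)) = f ∧ ∀ β ∈ B, β (Gt f - P (Gt f)) = 0) ∧
      ∀ u : V, T u = f → (∀ β ∈ B, β u = 0) → u = Gt f - P (Gt f) := by
  intro f
  have hTP : ∀ x : V, T (P x) = 0 := by
    intro x
    have : P x ∈ LinearMap.ker T := hrange ▸ LinearMap.mem_range_self P x
    exact this
  have hPP : ∀ x : V, P (P x) = P x := fun x => congrFun (congrArg DFunLike.coe hP) x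
  have hTGt : ∀ x : V, T (Gt x) = x := fun x => congrFun (congrArg DFunLike.coe hTG) x
  refine ⟨⟨?_, ?_⟩, ?_⟩
  · simp [map_sub, hTP, hTGt]
  · rw [← hkerP]
    simp [map_sub, hPP]
  · intro u hTu hBu
    have hPu : P u = 0 := (hkerP u).mpr hBu
    set d := u - (Gt f - P (Gt f)) with hd
    have hTd : T d = 0 := by simp [hd, map_sub, hTP, hTGt, hTu]
    obtain ⟨w, hw⟩ : d ∈ LinearMap.range P := hrange ▸ hTd
    have hPd : P d = d := by rw [← hw, hPP]
    have : d = 0 := by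
      rw [← hPd]; simp [hd, map_sub, hPu, hPP]
    have := sub_eq_zero.mp this
    exact this
end

section
/- Let K be a field, (F, ∂, ∫) an ordinary integro-differential algebra over K (dim_K ker ∂ = 1). Let n ≥ 1, c₀, …, c_{n−1} ∈ F, and define T : F → F by T(u) = ∂ⁿ(u) + Σ_{i=0}^{n−1} c_i·∂ⁱ(u). If there exist u₁, …, uₙ ∈ F with T(u_j) = 0 for all j such that the Wronskian matrix W with entries W_{i,j} = ∂ⁱ(u_j) (0 ≤ i ≤ n−1) has invertible determinant in F, then T is surjective. -/
/-- In an ordinary integro-differential algebra `(F, ∂, ∫)` over a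
field `K`, a monic differential operator `T = ∂ⁿ + c_{n−1}∂^{n−1} + ⋯ + c₀` admitting a
fundamental system `u₁, …, uₙ` with invertible Wronskian determinant is surjective. -/
theorem stmt_15 (K : Type*) [Field K] (F : Type*) [CommRing F] [Algebra K F]
    (D I : F →ₗ[K] F)
    (leibniz : ∀ f g : F, D (f * g) = D f * g + f * D g)
    (sect : ∀ f : F, D (I f) = f)
    (diffBaxter : ∀ f g : F,
      I (D f) * I (D g) + I (D (f * g)) = I (D f) * g + f * I (D g))
    (ordinary : Module.finrank K (LinearMap.ker D) = 1)
    (n : ℕ) (hn : 1 ≤ n) (c : Fin n → F)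
    (T : F → F)
    (hT : ∀ v : F, T v = (D ^ n) v + ∑ i : Fin n, c i * (D ^ (i : ℕ)) v)
    (u : Fin n → F)
    (hu : ∀ j, T (u j) = 0)
    (hd : IsUnit (Matrix.det (Matrix.of fun i j : Fin n => (D ^ (i : ℕ)) (u j)))) :
    Function.Surjective T := by
  classical
  intro f
  set W : Matrix (Fin n) (Fin n) F :=
    Matrix.of fun i j : Fin n => (D ^ (i : ℕ)) (u j) with hWdef
  have hWinv : W * W⁻¹ = 1 := Matrix.mul_nonsing_inv W hd
  set e : Fin n := ⟨n - 1, by omega⟩ with he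
  set d : Fin n → F := fun j => W⁻¹ j e with hdd
  have hsum : ∀ i : Fin n,
      (∑ j, (D ^ (i : ℕ)) (u j) * d j) = if i = e then 1 else 0 := by
    intro i
    have h := Matrix.ext_iff.mpr hWinv i e
    simpa [Matrix.mul_apply, Matrix.one_apply, hWdef, hdd] using h
  set v : F := ∑ j, u j * I (d j * f) with hv
  have step : ∀ (i : ℕ) (g : Fin n → F),
      D (∑ j, g j * I (d j * f)) = ∑ j, (D (g j) * I (d j * f) + g j * (d j * f)) := by
    intro i g
    rw [map_sum]
    refine Finset.sum_congr rfl fun j _ => ?_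
    rw [leibniz, sect]
  have key : ∀ i : ℕ, i < n → (D ^ i) v = ∑ j, (D ^ i) (u j) * I (d j * f) := by
    intro i
    induction i with
    | zero => intro _; simp [hv]
    | succ i ih =>
      intro hin
      have hi : i < n := by omega
      have hDi : (D ^ (i + 1)) v = D ((D ^ i) v) := by
        rw [pow_succ']; rfl
      rw [hDi, ih hi, step i, Finset.sum_add_distrib]
      have hzero : (∑ j, (D ^ i) (u j) * (d j * f)) = 0 := by
        have h1 : (∑ j, (D ^ i) (u j) * (d j * f))
            = (∑ j, (D ^ i) (u j) * d j) * f := by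
          rw [Finset.sum_mul]
          exact Finset.sum_congr rfl fun j _ => (mul_assoc _ _ _).symm
        have hne : (⟨i, hi⟩ : Fin n) ≠ e := by
          rw [he]; simp only [ne_eq, Fin.mk.injEq]; omega
        have h2 := hsum ⟨i, hi⟩
        rw [if_neg hne] at h2
        rw [h1, h2, zero_mul]
      rw [hzero, add_zero]
      refine Finset.sum_congr rfl fun j _ => ?_
      congr 1
      rw [pow_succ']; rfl
  have hDn : (D ^ n) v = (∑ j, (D ^ n) (u j) * I (d j * f)) + f := by
    obtain ⟨m, rfl⟩ : ∃ m, n = m + 1 := ⟨n - 1, by omega⟩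
    have hDi : (D ^ (m + 1)) v = D ((D ^ m) v) := by rw [pow_succ']; rfl
    rw [hDi, key m (by omega), step m, Finset.sum_add_distrib]
    congr 1
    · refine Finset.sum_congr rfl fun j _ => ?_
      congr 1
      rw [pow_succ']; rfl
    · have h1 : (∑ j, (D ^ m) (u j) * (d j * f))
          = (∑ j, (D ^ m) (u j) * d j) * f := by
        rw [Finset.sum_mul]
        exact Finset.sum_congr rfl fun j _ => (mul_assoc _ _ _).symm
      have h2 := hsum e
      rw [if_pos rfl] at h2
      rw [show ((e : Fin (m + 1)) : ℕ) = m from rfl] at h2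
      rw [h1, h2, one_mul]
  refine ⟨v, ?_⟩
  rw [hT, hDn]
  have hci : ∀ i : Fin n,
      (D ^ (i : ℕ)) v = ∑ j, (D ^ (i : ℕ)) (u j) * I (d j * f) :=
    fun i => key i i.isLt
  calc (∑ j, (D ^ n) (u j) * I (d j * f)) + f
        + ∑ i : Fin n, c i * (D ^ (i : ℕ)) v
      = (∑ j, (D ^ n) (u j) * I (d j * f))
        + (∑ j, (∑ i : Fin n, c i * (D ^ (i : ℕ)) (u j)) * I (d j * f)) + f := by
        have h3 : (∑ i : Fin n, c i * (D ^ (i : ℕ)) v)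
            = ∑ j, (∑ i : Fin n, c i * (D ^ (i : ℕ)) (u j)) * I (d j * f) := by
          simp only [hci, Finset.mul_sum]
          rw [Finset.sum_comm]
          refine Finset.sum_congr rfl fun j _ => ?_
          rw [Finset.sum_mul]
          exact Finset.sum_congr rfl fun i _ => (mul_assoc _ _ _).symm
        rw [h3]; ring
    _ = (∑ j, T (u j) * I (d j * f)) + f := by
        rw [← Finset.sum_add_distrib]
        congr 1
        refine Finset.sum_congr rfl fun j _ => ?_
        rw [hT (u j), add_mul]
    _ = f := by simp [hu]
end

section
/- Let K be a field of characteristic zero, R = K[y]/(y⁴), and F = R[X] the polynomial algebra over R, equipped with the derivation ∂ = d/dX (formal derivative in X, with coefficients in R as constants). Let ∫* : F → F be the R-linear map determined by Xᵏ ↦ Xᵏ⁺¹/(k+1), let ε : F → K be the K-algebra homomorphism obtained by evaluating X at 0 and then sending the class ȳ of y to 0, and define the K-linear map ∫ : F → F by ∫(f) = ∫*(f) + ε(f)·ȳ². Then: (a) ∂(∫f) = f for all f ∈ F, so ∫ is a section of ∂; (b) ∫ satisfies the pure Baxter axiom (∫f)·(∫g) = ∫(f·∫g) + ∫(g·∫f)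 for all f, g ∈ F; (c) ∫(ȳ·1) = ȳ·X whereas ȳ·∫(1) = ȳ·X + ȳ³ ≠ ȳ·X, so ∫ is not linear over the constants ker ∂ = R and hence does not satisfy the differential Baxter axiom (∫∂f)·(∫∂g) + ∫∂(fg) = (∫∂f)·g + f·(∫∂g). -/
open Polynomial

noncomputable section

/-- `R = K[y]/(y⁴)` (the variable of `K[X]` plays the role of `y`). -/
abbrev Rquot (K : Type*) [Field K] : Type _ :=
  K[X] ⧸ Ideal.span {(X : K[X]) ^ 4}

/-- The class `ȳ` of `y` in `R = K[y]/(y⁴)`. -/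
def ybar (K : Type*) [Field K] : Rquot K :=
  Ideal.Quotient.mk (Ideal.span {(X : K[X]) ^ 4}) X

/-- The `K`-algebra homomorphism `R → K` sending `ȳ ↦ 0`. -/
def evalY0 (K : Type*) [Field K] : Rquot K →ₐ[K] K :=
  Ideal.Quotient.liftₐ (Ideal.span {(X : K[X]) ^ 4}) (aeval (0 : K))
    (by
      intro a ha
      rw [Ideal.mem_span_singleton] at ha
      obtain ⟨b, rfl⟩ := ha
      simp)

/-- The usual integral `∫*` on `F = R[X]`, determined by `Xᵏ ↦ Xᵏ⁺¹/(k+1)`. -/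
def intStar (K : Type*) [Field K] : Polynomial (Rquot K) → Polynomial (Rquot K) :=
  fun p => p.sum fun n a => ((n : K) + 1)⁻¹ • (C a * X ^ (n + 1))

/-- `ε : F → K`, evaluation of `X` at `0` followed by `ȳ ↦ 0`. -/
def epsF (K : Type*) [Field K] : Polynomial (Rquot K) → K :=
  fun p => evalY0 K (p.eval 0)

/-- The modified integral `∫ f = ∫* f + ε(f)·ȳ²`. -/
def intOp (K : Type*) [Field K] : Polynomial (Rquot K) → Polynomial (Rquot K) :=
  fun p => intStar K p + C (algebraMap K (Rquot K) (epsF K p) * ybar K ^ 2)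

set_option linter.unusedSectionVars false

section Helpers

variable (K : Type*) [Field K] [CharZero K]

lemma smul_eq_C_mul' (c : K) (p : Polynomial (Rquot K)) :
    c • p = C (algebraMap K (Rquot K) c) * p :=
  Algebra.smul_def c p

lemma cast_succ_eq (n : ℕ) :
    ((n : Rquot K) + 1) = algebraMap K (Rquot K) ((n : K) + 1) := by
  push_cast; simp

lemma deriv_term (n : ℕ) (a : Rquot K) :
    derivative (((n : K) + 1)⁻¹ • (C a * X ^ (n + 1))) = C a * X ^ n := by
  have h : ((n : K) + 1) ≠ 0 := Nat.cast_add_one_ne_zero n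
  rw [derivative_smul, derivative_C_mul, derivative_X_pow]
  push_cast
  rw [cast_succ_eq, smul_eq_C_mul', ← mul_assoc, ← mul_assoc, ← C_mul, ← C_mul,
    show algebraMap K (Rquot K) (((n : K) + 1)⁻¹) * a * algebraMap K (Rquot K) ((n : K) + 1)
        = a by rw [mul_comm _ a, mul_assoc, ← map_mul, inv_mul_cancel₀ h, map_one, mul_one]]

lemma deriv_intStar (p : Polynomial (Rquot K)) : derivative (intStar K p) = p := by
  unfold intStar
  rw [Polynomial.sum, map_sum]
  simp_rw [deriv_term, C_mul_X_pow_eq_monomial]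
  exact (as_sum_support p).symm

lemma coeff0_intStar (p : Polynomial (Rquot K)) : (intStar K p).coeff 0 = 0 := by
  unfold intStar
  rw [Polynomial.sum, finset_sum_coeff]
  apply Finset.sum_eq_zero
  intro n _
  simp [coeff_smul, coeff_C_mul, coeff_X_pow]

lemma coeff0_intOp (p : Polynomial (Rquot K)) :
    (intOp K p).coeff 0 = algebraMap K (Rquot K) (epsF K p) * ybar K ^ 2 := by
  unfold intOp
  rw [coeff_add, coeff0_intStar, coeff_C]
  simp

lemma deriv_intOp (p : Polynomial (Rquot K)) : derivative (intOp K p) = p := by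
  unfold intOp
  rw [derivative_add, derivative_C, add_zero, deriv_intStar]

lemma poly_ext (p q : Polynomial (Rquot K)) (h1 : derivative p = derivative q)
    (h2 : p.coeff 0 = q.coeff 0) : p = q := by
  ext n
  cases n with
  | zero => exact h2
  | succ n =>
    have h3 := congrArg (fun r => Polynomial.coeff r n) h1
    simp only [coeff_derivative] at h3
    have hu : IsUnit ((n : Rquot K) + 1) := by
      rw [cast_succ_eq]
      exact (isUnit_iff_ne_zero.mpr (Nat.cast_add_one_ne_zero n)).map _
    exact hu.mul_right_cancel h3

lemma ybar_pow4 : ybar K ^ 4 = 0 := by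
  unfold ybar
  rw [← map_pow, Ideal.Quotient.eq_zero_iff_mem]
  exact Ideal.subset_span rfl

lemma evalY0_ybar : evalY0 K (ybar K) = 0 := by
  unfold evalY0 ybar
  simp [Ideal.Quotient.liftₐ_apply]

lemma epsF_intOp (p : Polynomial (Rquot K)) : epsF K (intOp K p) = 0 := by
  unfold epsF
  rw [← coeff_zero_eq_eval_zero, coeff0_intOp, map_mul, map_pow, evalY0_ybar]
  ring

lemma epsF_mul (p q : Polynomial (Rquot K)) :
    epsF K (p * q) = epsF K p * epsF K q := by
  unfold epsF
  rw [eval_mul, map_mul]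

lemma ybar_pow3_ne : ybar K ^ 3 ≠ 0 := by
  unfold ybar
  rw [← map_pow, Ne, Ideal.Quotient.eq_zero_iff_mem, Ideal.mem_span_singleton]
  intro h
  have := (X_pow_dvd_iff.mp h) 3 (by norm_num)
  simp [coeff_X_pow] at this

lemma intStar_C (a : Rquot K) : intStar K (C a) = C a * X := by
  unfold intStar
  rw [sum_C_index (by simp)]
  simp

lemma epsF_C (a : Rquot K) : epsF K (C a) = evalY0 K a := by
  unfold epsF; simp

lemma intOp_C_ybar : intOp K (C (ybar K)) = C (ybar K) * X := by
  unfold intOp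
  rw [intStar_C, epsF_C, evalY0_ybar, map_zero, zero_mul, C_0, add_zero]

lemma intOp_one : intOp K 1 = X + C (ybar K ^ 2) := by
  unfold intOp
  rw [show (1 : Polynomial (Rquot K)) = C 1 from C_1.symm, intStar_C, epsF_C]
  simp

lemma intOp_zero : intOp K 0 = 0 := by
  unfold intOp intStar epsF
  simp

end Helpers

/-- For `K` of characteristic zero, `R = K[y]/(y⁴)`, `F = R[X]` with
`∂ = d/dX` and `∫ f = ∫* f + ε(f)·ȳ²`: (a) `∫` is a section of `∂`; (b) `∫` satisfies
the pure Baxter axiom; (c) `∫(ȳ·1) = ȳ·X` while `ȳ·∫(1) = ȳ·X + ȳ³ ≠ ȳ·X`, so `∫` is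
not linear over the constants `ker ∂ = R` and does not satisfy the differential Baxter
axiom. -/
theorem stmt_16 (K : Type*) [Field K] [CharZero K] :
    (∀ f : Polynomial (Rquot K), derivative (intOp K f) = f) ∧
    (∀ f g : Polynomial (Rquot K),
      intOp K f * intOp K g = intOp K (f * intOp K g) + intOp K (g * intOp K f)) ∧
    intOp K (C (ybar K) * 1) = C (ybar K) * X ∧
    C (ybar K) * intOp K 1 = C (ybar K) * X + C (ybar K ^ 3) ∧
    C (ybar K) * X + C (ybar K ^ 3) ≠ C (ybar K) * X ∧
    ¬ (∀ f g : Polynomial (Rquot K),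
        intOp K (derivative f) * intOp K (derivative g) + intOp K (derivative (f * g)) =
          intOp K (derivative f) * g + f * intOp K (derivative g)) := by
  have hc1 : intOp K (C (ybar K) * 1) = C (ybar K) * X := by
    rw [mul_one, intOp_C_ybar]
  have hc2 : C (ybar K) * intOp K 1 = C (ybar K) * X + C (ybar K ^ 3) := by
    rw [intOp_one, mul_add, ← C_mul, ← pow_succ']
  have hc3 : C (ybar K) * X + C (ybar K ^ 3) ≠ C (ybar K) * X := by
    intro h
    have h0 : C (ybar K ^ 3) = (0 : Polynomial (Rquot K)) := by
      have := add_eq_left.mp h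
      exact this
    exact ybar_pow3_ne K (Polynomial.C_eq_zero.mp h0)
  refine ⟨deriv_intOp K, ?_, hc1, hc2, hc3, ?_⟩
  · intro f g
    apply poly_ext
    · rw [derivative_mul, deriv_intOp, deriv_intOp, derivative_add, deriv_intOp, deriv_intOp]
      ring
    · rw [mul_coeff_zero, coeff0_intOp, coeff0_intOp, coeff_add, coeff0_intOp, coeff0_intOp,
        epsF_mul, epsF_mul, epsF_intOp, epsF_intOp, mul_zero, mul_zero, map_zero, zero_mul, add_zero,
        show (algebraMap K (Rquot K) (epsF K f) * ybar K ^ 2) *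
            (algebraMap K (Rquot K) (epsF K g) * ybar K ^ 2) =
          algebraMap K (Rquot K) (epsF K f) * algebraMap K (Rquot K) (epsF K g) * ybar K ^ 4
          by ring,
        ybar_pow4, mul_zero]
  · intro hdiff
    have h := hdiff (C (ybar K)) X
    rw [derivative_C, derivative_X, intOp_zero, zero_mul, zero_mul, zero_add, zero_add,
      show derivative (C (ybar K) * X) = C (ybar K) by
        rw [derivative_C_mul, derivative_X, mul_one],
      intOp_C_ybar] at h
    rw [hc2] at h
    exact hc3 h.symm

end
end
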